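/- arXiv:1404.0021 — 7 statements merged into one kernel-verified Lean document; each statement's English description precedes it below -/
import Mathlib

section
/- Let P be a finite poset and F a family of posets. If S is an induced subposet of the lexicographic power P^k containing no member of F as an induced subposet, then |S| ≤ (ex*(P,F))^k, where ex*(P,F) is the maximum size of an F-free induced subposet of P. -/
/-- The lexicographic `k`-th power of a poset `P`: `k`-tuples ordered lexicographically. -/
abbrev LexPow (P : Type*) (k : ℕ) := Lex (Fin k → P)

/-- `exStar P F` : the maximum size of an induced subposet of `P` containing no member of
the family `F` as an induced subposet. -/
noncomputable def exStar (α : Type*) [PartialOrder α] {ι : Type*} (F : ι → Type*)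
    [∀ i, PartialOrder (F i)] : ℕ :=
  sSup {n | ∃ S : Finset α,
    (∀ i, ¬ Nonempty (F i ↪o {x // x ∈ S})) ∧ S.card = n}

/-!
`P^(k+1)` is the lexicographic product `P ×ₗ P^k`. In a lexicographic product `α ×ₗ β`, the
first coordinates of an `F`-free set `S` form an `F`-free subset of `α` (one point of `S` chosen
above each of them spans an induced copy), and every fibre of `S` is an induced copy of an
`F`-free subset of `β`. Hence `|S|` is at most the product of the two bounds, and induction on
`k` gives `ex*(P, F)^k`.
-/

theorem Pi.Lex.toLex_cons_lt_toLex_cons_iff {P : Type*} [LT P] {k : ℕ} {a b : P}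
    {x y : Fin k → P} :
    toLex (Fin.cons a x : Fin (k + 1) → P) < toLex (Fin.cons b y) ↔
      a < b ∨ a = b ∧ toLex x < toLex y := by
  constructor
  · rintro ⟨i, hagree, hlt⟩
    cases i using Fin.cases with
    | zero => exact Or.inl hlt
    | succ i =>
      exact Or.inr ⟨hagree 0 i.succ_pos,
        i, fun j hj => hagree j.succ (Fin.succ_lt_succ_iff.mpr hj), hlt⟩
  · rintro (hlt | ⟨rfl, i, hagree, hlt⟩)
    · exact ⟨0, fun j hj => absurd hj j.not_lt_zero, hlt⟩
    · refine ⟨i.succ, fun j hj => ?_, hlt⟩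
      cases j using Fin.cases with
      | zero => rfl
      | succ j => exact hagree j (Fin.succ_lt_succ_iff.mp hj)

def LexPow.consOrderIso (P : Type*) [PartialOrder P] (k : ℕ) :
    P ×ₗ LexPow P k ≃o LexPow P (k + 1) where
  toEquiv := ofLex.trans <| (Equiv.prodCongr (Equiv.refl P) ofLex).trans <|
    (Fin.consEquiv fun _ => P).trans toLex
  map_rel_iff' {x y} := by
    rw [le_iff_lt_or_eq, le_iff_lt_or_eq, Equiv.apply_eq_iff_eq, Prod.Lex.lt_iff]
    obtain ⟨a, x⟩ := x
    obtain ⟨b, y⟩ := y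
    exact or_congr_left Pi.Lex.toLex_cons_lt_toLex_cons_iff

namespace Finset

variable {ι : Type*} {F : ι → Type*} {α β : Type*}

variable (F) in
def InducedFree [∀ i, LE (F i)] [LE α] (S : Finset α) : Prop :=
  ∀ i, ¬ Nonempty (F i ↪o {x // x ∈ S})

theorem InducedFree.of_le_iff [∀ i, LE (F i)] [PartialOrder α] [Preorder β] {S : Finset β}
    (hS : S.InducedFree F) {T : Finset α} (f : α → β) (hmem : ∀ x ∈ T, f x ∈ S)
    (hle : ∀ x ∈ T, ∀ y ∈ T, f x ≤ f y ↔ x ≤ y) : T.InducedFree F := by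
  rintro i ⟨e⟩
  exact hS i ⟨e.trans <| OrderEmbedding.ofMapLEIff (fun x => ⟨f x, hmem x x.2⟩)
    fun x y => hle x x.2 y y.2⟩

theorem InducedFree.card_le_exStar [∀ i, PartialOrder (F i)] [PartialOrder α] [Fintype α]
    {T : Finset α} (hT : T.InducedFree F) : T.card ≤ exStar α F :=
  le_csSup ⟨Fintype.card α, by rintro _ ⟨S, -, rfl⟩; exact S.card_le_univ⟩ ⟨T, hT, rfl⟩

theorem InducedFree.card_le_of_orderIso [∀ i, LE (F i)] [PartialOrder α] [Preorder β]
    (e : α ≃o β) {n : ℕ} (hα : ∀ T : Finset α, T.InducedFree F → T.card ≤ n)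
    {S : Finset β} (hS : S.InducedFree F) : S.card ≤ n :=
  calc S.card = (S.map e.symm.toEquiv.toEmbedding).card := (card_map _).symm
    _ ≤ n := hα _ <| hS.of_le_iff e (by simp) (by simp)

theorem InducedFree.image_fst [∀ i, LE (F i)] [PartialOrder α] [Preorder β] [DecidableEq α]
    {S : Finset (α ×ₗ β)} (hS : S.InducedFree F) (hne : S.Nonempty) :
    (S.image fun s => (ofLex s).1).InducedFree F := by
  have : Nonempty (α ×ₗ β) := hne.to_subtype.map Subtype.val
  set g := Function.invFunOn (fun s : α ×ₗ β => (ofLex s).1) S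
  have hg : ∀ a ∈ S.image (fun s => (ofLex s).1), g a ∈ S ∧ (ofLex (g a)).1 = a :=
    fun a ha => Function.invFunOn_pos (mem_image.mp ha)
  refine hS.of_le_iff g (fun a ha => (hg a ha).1) fun a ha b hb => ⟨fun h => ?_, fun h => ?_⟩
  · have := Prod.Lex.monotone_fst _ _ h
    rwa [(hg a ha).2, (hg b hb).2] at this
  · rcases h.lt_or_eq with h | rfl
    · refine (Prod.Lex.lt_iff.mpr (Or.inl ?_)).le
      rwa [(hg a ha).2, (hg b hb).2]
    · exact le_rfl

theorem InducedFree.preimage_toLex [∀ i, LE (F i)] [Preorder α] [PartialOrder β]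
    {S : Finset (α ×ₗ β)} (hS : S.InducedFree F) (a : α) :
    (S.preimage (fun b => toLex (a, b))
      (toLex.injective.comp (Prod.mk_right_injective a)).injOn).InducedFree F :=
  hS.of_le_iff _ (fun _ hb => mem_preimage.mp hb) fun _ _ _ _ => by
    simp [Prod.Lex.toLex_le_toLex]

theorem InducedFree.card_le_mul_of_lex [∀ i, LE (F i)] [PartialOrder α] [PartialOrder β]
    {m n : ℕ} (hα : ∀ T : Finset α, T.InducedFree F → T.card ≤ m)
    (hβ : ∀ T : Finset β, T.InducedFree F → T.card ≤ n)
    {S : Finset (α ×ₗ β)} (hS : S.InducedFree F) : S.card ≤ m * n := by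
  classical
  obtain rfl | hne := S.eq_empty_or_nonempty
  · simp
  have hfibre : ∀ a, (S.filter fun s => (ofLex s).1 = a).card ≤ n := by
    intro a
    refine (card_le_card_of_injOn (fun s => (ofLex s).2) (fun s hs => ?_) ?_).trans
      (hβ _ (hS.preimage_toLex a))
    · obtain ⟨hsS, rfl⟩ := mem_filter.mp hs
      simpa using hsS
    · intro s hs t ht hst
      have hfst := (mem_filter.mp hs).2.trans (mem_filter.mp ht).2.symm
      exact ofLex.injective (Prod.ext hfst hst)
  calc S.card ≤ n * (S.image fun s => (ofLex s).1).card :=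
        card_le_mul_card_image S n fun a _ => hfibre a
    _ ≤ n * m := Nat.mul_le_mul_left n (hα _ (hS.image_fst hne))
    _ = m * n := mul_comm n m

end Finset

/-- If `S` is an `F`-free induced subposet of the lexicographic power `P^k`,
then `|S| ≤ (ex*(P,F))^k`. -/
theorem lex_power_free_bound (P : Type*) [PartialOrder P] [Fintype P] {ι : Type*}
    (F : ι → Type*) [∀ i, PartialOrder (F i)] (k : ℕ) (S : Finset (LexPow P k))
    (hS : ∀ i, ¬ Nonempty (F i ↪o {x // x ∈ S})) :
    S.card ≤ (exStar P F) ^ k := by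
  induction k with
  | zero =>
    rw [pow_zero]
    exact Finset.card_le_one.2 fun a _ b _ => ofLex.injective (Subsingleton.elim _ _)
  | succ k ih =>
    refine Finset.InducedFree.card_le_of_orderIso (LexPow.consOrderIso P k) (fun T hT => ?_) hS
    rw [pow_succ']
    exact hT.card_le_mul_of_lex (fun _ hT => hT.card_le_exStar) ih
end

section
/- In the lexicographic power P^k, for any fixed initial segment α of length i and any induced subposet S of P^k, the set Q(α) = {p ∈ P : (α,p) is an initial segment of some s ∈ S} embeds into S as an induced subposet of S. -/
namespace Pi

variable {ι : Type*} {β : ι → Type*} [LinearOrder ι] [∀ i, PartialOrder (β i)]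

theorem toLex_lt_toLex_iff_of_eqOn_of_ne {x y : ∀ i, β i} {i : ι}
    (hagree : ∀ j < i, x j = y j) (hne : x i ≠ y i) :
    toLex x < toLex y ↔ x i < y i := by
  refine ⟨fun ⟨j, hbelow, hlt⟩ => ?_, fun hlt => ⟨i, hagree, hlt⟩⟩
  rcases lt_trichotomy j i with hji | rfl | hij
  · exact absurd hlt (hagree j hji).not_lt
  · exact hlt
  · exact absurd (hbelow i hij) hne

theorem toLex_le_toLex_iff_of_eqOn_of_ne {x y : ∀ i, β i} {i : ι}
    (hagree : ∀ j < i, x j = y j) (hne : x i ≠ y i) :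
    toLex x ≤ toLex y ↔ x i ≤ y i := by
  have hxy : toLex x ≠ toLex y := fun h => hne (congrFun h i)
  rw [hxy.le_iff_lt, hne.le_iff_lt]
  exact toLex_lt_toLex_iff_of_eqOn_of_ne hagree hne

end Pi

/-- For an initial segment `α` of length `i < k` and an induced subposet `S` of `P^k`,
the set `Q(α)` of possible `(i+1)`-st coordinates of elements of `S` with initial segment
`α` embeds into `S` as an induced subposet. -/
theorem Q_embeds (P : Type*) [PartialOrder P] (k i : ℕ) (hik : i < k) (α : Fin i → P)
    (S : Set (LexPow P k)) :
    Nonempty ({p : P // ∃ s ∈ S,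
        (∀ j : Fin i, ofLex s (Fin.castLE hik.le j) = α j) ∧ ofLex s ⟨i, hik⟩ = p} ↪o ↥S) := by
  choose w hwS hwα hwi using fun p : {p : P // ∃ s ∈ S,
      (∀ j : Fin i, ofLex s (Fin.castLE hik.le j) = α j) ∧ ofLex s ⟨i, hik⟩ = p} => p.2
  refine ⟨OrderEmbedding.ofMapLEIff (fun p => ⟨w p, hwS p⟩) fun p q => ?_⟩
  rcases eq_or_ne p q with rfl | hpq
  · exact iff_of_true le_rfl le_rfl
  have hagree : ∀ j < (⟨i, hik⟩ : Fin k), ofLex (w p) j = ofLex (w q) j :=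
    fun j hj => (hwα p ⟨j, hj⟩).trans (hwα q ⟨j, hj⟩).symm
  have hne : ofLex (w p) ⟨i, hik⟩ ≠ ofLex (w q) ⟨i, hik⟩ := by
    rwa [hwi, hwi, ne_eq, ← Subtype.ext_iff]
  have key := Pi.toLex_le_toLex_iff_of_eqOn_of_ne hagree hne
  rw [hwi, hwi] at key
  exact key
end

section
/- The standard example S_m (for m ≥ 3) has order dimension exactly m. -/
/-- A poset has order dimension at most `d`: there are `d` linear extensions
whose intersection is the order relation. -/
def dimLE (α : Type*) [PartialOrder α] (d : ℕ) : Prop :=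
  ∃ L : Fin d → LinearOrder α,
    (∀ i, ∀ x y : α, x ≤ y → (L i).le x y) ∧
    (∀ x y : α, (∀ i, (L i).le x y) → x ≤ y)

/-- The standard example `S_m`: `inl i = a_i`, `inr j = b_j`, with `a_i < b_j` iff `i ≠ j`,
and no other strict relations. -/
def StdEx (m : ℕ) := Fin m ⊕ Fin m

instance (m : ℕ) : PartialOrder (StdEx m) where
  le x y := x = y ∨ ∃ i j, x = Sum.inl i ∧ y = Sum.inr j ∧ i ≠ j
  le_refl x := Or.inl rfl
  le_trans := by
    rintro x y z (rfl | ⟨i, j, rfl, rfl, hij⟩) (rfl | ⟨i', j', h1, rfl, hij'⟩)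
    · exact Or.inl rfl
    · exact Or.inr ⟨i', j', h1, rfl, hij'⟩
    · exact Or.inr ⟨i, j, rfl, rfl, hij⟩
    · exact absurd h1 (by simp)
  le_antisymm := by
    rintro x y (rfl | ⟨i, j, rfl, rfl, hij⟩) (h | ⟨i', j', h1, h2, hij'⟩)
    · rfl
    · rfl
    · exact absurd h (by simp)
    · exact absurd h1 (by simp)

instance (m : ℕ) : Fintype (StdEx m) := instFintypeSum _ _

/-! For `m ≥ 2` the `m` linear extensions `a_j < b_i < a_i < b_j` (`j ≠ i`) realize `S_m`:
every incomparable pair is reversed by one of them. Conversely, a realizer must reverse each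
pair `(a_i, b_i)`, and a linear extension reversing two of them, for `i ≠ j`, would give
`a_i < b_j ≤ a_j < b_i ≤ a_i`. -/

open Function

theorem dimLE_of_injective_of_monotone {α β : Type*} [PartialOrder α] [LinearOrder β] {d : ℕ}
    (f : Fin d → α → β) (hinj : ∀ k, Injective (f k)) (hmono : ∀ k, Monotone (f k))
    (hreflect : ∀ x y, (∀ k, f k x ≤ f k y) → x ≤ y) : dimLE α d :=
  ⟨fun k => LinearOrder.lift' (f k) (hinj k), fun k _ _ h => hmono k h, hreflect⟩

namespace StdEx

variable {m : ℕ}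

def a (i : Fin m) : StdEx m := Sum.inl i

def b (j : Fin m) : StdEx m := Sum.inr j

theorem a_le_b_iff {i j : Fin m} : a i ≤ b j ↔ i ≠ j := by
  constructor
  · rintro (h | ⟨i', j', hi, hj, hne⟩)
    · exact absurd h Sum.inl_ne_inr
    · rwa [Sum.inl_injective hi, Sum.inr_injective hj]
  · exact fun h => Or.inr ⟨i, j, rfl, rfl, h⟩

/-- Ranks in the `i`-th linear extension `a_j < b_i < a_i < b_j` (`j ≠ i`),
ties broken by index. -/
def ext (i : Fin m) : StdEx m → ℕ
  | .inl j => if j = i then m + 1 else j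
  | .inr j => if j = i then m else m + 2 + j

theorem injective_ext (i : Fin m) : Injective (ext i) := by
  rintro (j | j) (k | k) h <;> simp only [ext] at h <;> split_ifs at h <;> grind

theorem monotone_ext (i : Fin m) : Monotone (ext i) := by
  rintro x y (rfl | ⟨j, k, rfl, rfl, hjk⟩)
  · exact le_rfl
  · simp only [ext]; split_ifs <;> grind

theorem le_of_forall_ext_le (hm : 2 ≤ m) {x y : StdEx m} (h : ∀ i, ext i x ≤ ext i y) :
    x ≤ y := by
  have : Nontrivial (Fin m) := Fin.nontrivial_iff_two_le.mpr hm
  rcases x with (i | i) <;> rcases y with (j | j)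
  · obtain rfl | hij := eq_or_ne i j
    · exact le_rfl
    · have := h i; simp only [ext, hij.symm, ↓reduceIte] at this; omega
  · obtain rfl | hij := eq_or_ne i j
    · have := h i; simp [ext] at this
    · exact a_le_b_iff.mpr hij
  · obtain ⟨k, hk⟩ := exists_ne i
    have := h k; simp only [ext, hk.symm, if_false] at this; split_ifs at this <;> omega
  · obtain rfl | hij := eq_or_ne i j
    · exact le_rfl
    · have := h j; simp only [ext, hij, ↓reduceIte] at this; omega

theorem dimLE_self (hm : 2 ≤ m) : dimLE (StdEx m) m :=
  dimLE_of_injective_of_monotone ext injective_ext monotone_ext fun _ _ => le_of_forall_ext_le hm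

theorem eq_of_not_le_of_not_le {L : LinearOrder (StdEx m)}
    (hL : ∀ x y : StdEx m, x ≤ y → L.le x y) {i j : Fin m}
    (hi : ¬ L.le (a i) (b i)) (hj : ¬ L.le (a j) (b j)) : i = j := by
  by_contra hij
  have hbj : L.le (b j) (a j) := (L.le_total _ _).resolve_left hj
  exact hi <| L.le_trans _ _ _ (L.le_trans _ _ _ (hL _ _ (a_le_b_iff.mpr hij)) hbj)
    (hL _ _ (a_le_b_iff.mpr (Ne.symm hij)))

theorem le_of_dimLE {d : ℕ} (h : dimLE (StdEx m) d) : m ≤ d := by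
  obtain ⟨L, hextends, hrealizes⟩ := h
  have reverses : ∀ i, ∃ k, ¬ (L k).le (a i) (b i) := fun i => by
    by_contra! hc
    exact a_le_b_iff.mp (hrealizes _ _ hc) rfl
  choose f hf using reverses
  have hf_inj : Injective f := fun i j hij =>
    eq_of_not_le_of_not_le (hextends (f i)) (hf i) (hij ▸ hf j)
  simpa using Fintype.card_le_of_injective f hf_inj

end StdEx

/-- The standard example `S_m` (for `m ≥ 3`) has order dimension exactly `m`. -/
theorem stdEx_dim (m : ℕ) (hm : 3 ≤ m) :
    dimLE (StdEx m) m ∧ ∀ d : ℕ, dimLE (StdEx m) d → m ≤ d :=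
  ⟨StdEx.dimLE_self (by omega), fun _ => StdEx.le_of_dimLE⟩
end

section
/- For all sufficiently large n, every n-element poset need not contain a 2-dimensional induced subposet of size larger than n^{0.8295}; that is, ex*(n, D_3) ≤ n^{0.8295}. -/
/-!
In the standard example `S₁₀` (20 elements) an induced subposet of dimension at most 2 has at
most `10 + 2` elements: every complete pair `aᵢ, bᵢ` in it must be reversed by one of the two
linear extensions, and no linear extension reverses two of them. Such bounds add up under disjoint
sums and multiply under lexicographic products. So if `n` has base-20 digits `d₀, d₁, …`, the
poset `d₀ ⊕ S₁₀ ×ₗ (d₁ ⊕ S₁₀ ×ₗ (⋯))`, with `dₖ` standing for a `dₖ`-element chain, has `n`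
elements and no 2-dimensional induced subposet with more than `∑ dₖ 12ᵏ = O(n ^ log₂₀ 12)`
elements; finally `log₂₀ 12 < 0.8295`.
-/

open Finset

lemma dimLE.of_orderEmbedding {α β : Type*} [PartialOrder α] [PartialOrder β] {d : ℕ}
    (f : β ↪o α) (h : dimLE α d) : dimLE β d := by
  obtain ⟨L, hext, hreal⟩ := h
  refine ⟨fun i => @LinearOrder.lift' β α (L i) f f.injective, fun i x y hxy => ?_,
    fun x y hxy => ?_⟩
  · exact hext i _ _ (f.le_iff_le.2 hxy)
  · exact f.le_iff_le.1 (hreal _ _ hxy)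

lemma dimLE_of_mapsTo {α β : Type*} [PartialOrder α] [PartialOrder β] {d : ℕ} (f : β ↪o α)
    {s : Finset α} {t : Finset β} (hst : ∀ b ∈ t, f b ∈ s) (hs : dimLE s d) : dimLE t d :=
  hs.of_orderEmbedding <| OrderEmbedding.ofMapLEIff (fun b => ⟨f b.1, hst b.1 b.2⟩)
    fun _ _ => f.le_iff_le

lemma dimLE.card_le_of_crossing {α ι : Type*} [PartialOrder α] [Fintype ι] {d : ℕ}
    (h : dimLE α d) (x y : ι → α) (hxy : ∀ i, ¬ x i ≤ y i)
    (hcross : ∀ i j, i ≠ j → x i ≤ y j) : Fintype.card ι ≤ d := by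
  obtain ⟨L, hext, hreal⟩ := h
  have hrev : ∀ i, ∃ t, ¬ (L t).le (x i) (y i) := by
    by_contra! hall
    obtain ⟨i, hi⟩ := hall
    exact hxy i (hreal _ _ hi)
  choose τ hτ using hrev
  have hτinj : Function.Injective τ := by
    intro i j hij
    by_contra hne
    have hyx : (L (τ j)).le (y j) (x j) := ((L (τ j)).le_total _ _).resolve_left (hτ j)
    refine hij ▸ hτ i <| (L (τ j)).le_trans _ _ _ (hext _ _ _ (hcross i j hne)) <|
      (L (τ j)).le_trans _ _ _ hyx (hext _ _ _ (hcross j i (Ne.symm hne)))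
  simpa using Fintype.card_le_of_injective τ hτinj

def DimLESubposetsCardLE (α : Type*) [PartialOrder α] (d m : ℕ) : Prop :=
  ∀ s : Finset α, dimLE s d → #s ≤ m

lemma dimLESubposetsCardLE_of_card_le {α : Type*} [PartialOrder α] [Fintype α] {m : ℕ}
    (d : ℕ) (h : Fintype.card α ≤ m) : DimLESubposetsCardLE α d m :=
  fun s _ => (card_le_univ s).trans h

lemma DimLESubposetsCardLE.sum {α β : Type*} [PartialOrder α] [PartialOrder β] {d a b : ℕ}
    (hα : DimLESubposetsCardLE α d a) (hβ : DimLESubposetsCardLE β d b) :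
    DimLESubposetsCardLE (α ⊕ β) d (a + b) := by
  intro s hs
  rw [← card_toLeft_add_card_toRight]
  exact add_le_add
    (hα _ (dimLE_of_mapsTo (OrderEmbedding.ofMapLEIff Sum.inl fun _ _ => Sum.inl_le_inl_iff)
      (fun _ => mem_toLeft.1) hs))
    (hβ _ (dimLE_of_mapsTo (OrderEmbedding.ofMapLEIff Sum.inr fun _ _ => Sum.inr_le_inr_iff)
      (fun _ => mem_toRight.1) hs))

section Lex

variable {α β : Type*} [PartialOrder α] [PartialOrder β] {d : ℕ}

def Prod.Lex.fiberEmbedding (a : α) : β ↪o α ×ₗ β :=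
  OrderEmbedding.ofMapLEIff (fun b => toLex (a, b)) fun _ _ => by
    simp [Prod.Lex.toLex_le_toLex]

lemma dimLE_image_fst_ofLex [DecidableEq α] {s : Finset (α ×ₗ β)} (hs : dimLE s d) :
    dimLE (s.image fun p => (ofLex p).1) d := by
  have hrep : ∀ a : s.image fun p => (ofLex p).1, ∃ p : s, (ofLex p.1).1 = a := by
    rintro ⟨a, ha⟩
    obtain ⟨p, hp, rfl⟩ := mem_image.1 ha
    exact ⟨⟨p, hp⟩, rfl⟩
  choose rep hrep using hrep
  refine hs.of_orderEmbedding (OrderEmbedding.ofMapLEIff rep fun a a' => ?_)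
  refine ⟨fun h => ?_, fun h => ?_⟩
  · simpa only [hrep, Subtype.coe_le_coe] using Prod.Lex.monotone_fst_ofLex h
  · obtain rfl | hne := eq_or_ne a a'
    · exact le_rfl
    · refine Prod.Lex.le_iff.2 (Or.inl ?_)
      rw [hrep, hrep]
      exact lt_of_le_of_ne h (Subtype.coe_ne_coe.2 hne)

lemma DimLESubposetsCardLE.lex {a b : ℕ} (hα : DimLESubposetsCardLE α d a)
    (hβ : DimLESubposetsCardLE β d b) : DimLESubposetsCardLE (α ×ₗ β) d (a * b) := by
  classical
  intro s hs
  have hfiber : ∀ x ∈ s.image fun p => (ofLex p).1, #{p ∈ s | (ofLex p).1 = x} ≤ b := by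
    intro x _
    rw [← card_image_of_injOn (f := fun p => (ofLex p).2) fun p hp q hq hpq =>
      ofLex.injective (Prod.ext ((mem_filter.1 hp).2.trans (mem_filter.1 hq).2.symm) hpq)]
    refine hβ _ (dimLE_of_mapsTo (Prod.Lex.fiberEmbedding x) ?_ hs)
    simp only [mem_image, mem_filter]
    rintro _ ⟨p, ⟨hp, rfl⟩, rfl⟩
    exact hp
  calc #s ≤ b * #(s.image fun p => (ofLex p).1) := card_le_mul_card_image s b hfiber
    _ ≤ b * a := Nat.mul_le_mul_left b (hα _ (dimLE_image_fst_ofLex hs))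
    _ = a * b := mul_comm b a

end Lex

def HornerPoset (α : Type) : List ℕ → Type
  | [] => PEmpty
  | d :: l => Fin d ⊕ (α ×ₗ HornerPoset α l)

namespace HornerPoset

variable (α : Type)

instance instPartialOrder [PartialOrder α] : ∀ l, PartialOrder (HornerPoset α l)
  | [] => inferInstanceAs (PartialOrder PEmpty)
  | d :: l =>
    letI := instPartialOrder l
    inferInstanceAs (PartialOrder (Fin d ⊕ (α ×ₗ HornerPoset α l)))

instance instFintype [Fintype α] : ∀ l, Fintype (HornerPoset α l)
  | [] => inferInstanceAs (Fintype PEmpty)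
  | d :: l =>
    letI := instFintype l
    inferInstanceAs (Fintype (Fin d ⊕ (α ×ₗ HornerPoset α l)))

lemma card [Fintype α] : ∀ l, Fintype.card (HornerPoset α l) = Nat.ofDigits (Fintype.card α) l
  | [] => Fintype.card_pempty
  | d :: l => by
    rw [Nat.ofDigits_cons, ← card l]
    exact (Fintype.card_sum ..).trans <| by
      rw [Fintype.card_fin, Fintype.card_lex, Fintype.card_prod]

end HornerPoset

lemma DimLESubposetsCardLE.hornerPoset {α : Type} [PartialOrder α] {d m : ℕ}
    (h : DimLESubposetsCardLE α d m) :
    ∀ l, DimLESubposetsCardLE (HornerPoset α l) d (Nat.ofDigits m l)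
  | [] => dimLESubposetsCardLE_of_card_le (α := PEmpty) d (by simp)
  | c :: l => by
    rw [Nat.ofDigits_cons]
    exact (dimLESubposetsCardLE_of_card_le d (Fintype.card_fin c).le).sum
      (h.lex (DimLESubposetsCardLE.hornerPoset h l))

-- `low i` and `high i` are the elements `aᵢ` and `bᵢ` of the standard example `Sₙ`, `n = |ι|`.
inductive StandardExample (ι : Type*) where
  | low : ι → StandardExample ι
  | high : ι → StandardExample ι

namespace StandardExample

variable {ι : Type*}

protected def le : StandardExample ι → StandardExample ι → Prop
  | low i, low j => i = j
  | high i, high j => i = j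
  | low i, high j => i ≠ j
  | high _, low _ => False

instance : PartialOrder (StandardExample ι) where
  le := StandardExample.le
  le_refl := by rintro (i | i) <;> rfl
  le_trans := by
    rintro (i | i) (j | j) (k | k) <;> simp only [StandardExample.le] <;> grind
  le_antisymm := by
    rintro (i | i) (j | j) <;> simp only [StandardExample.le] <;> grind

lemma low_le_high_iff {i j : ι} : low i ≤ high j ↔ i ≠ j := Iff.rfl

def equivSum : StandardExample ι ≃ ι ⊕ ι where
  toFun
    | low i => .inl i
    | high i => .inr i
  invFun := Sum.elim low high
  left_inv := by rintro (i | i) <;> rfl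
  right_inv := by rintro (i | i) <;> rfl

instance [Fintype ι] : Fintype (StandardExample ι) := Fintype.ofEquiv _ equivSum.symm

lemma card [Fintype ι] : Fintype.card (StandardExample ι) = 2 * Fintype.card ι := by
  rw [Fintype.card_congr equivSum, Fintype.card_sum, two_mul]

lemma dimLESubposetsCardLE [Fintype ι] (d : ℕ) :
    DimLESubposetsCardLE (StandardExample ι) d (Fintype.card ι + d) := by
  classical
  intro s hs
  set u := s.map equivSum.toEmbedding
  have hmem : ∀ i ∈ u.toLeft ∩ u.toRight, low i ∈ s ∧ high i ∈ s := by
    simp [u, mem_map_equiv, equivSum]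
  have hcard : #s ≤ Fintype.card ι + #(u.toLeft ∩ u.toRight) := by
    rw [← card_map equivSum.toEmbedding, ← card_toLeft_add_card_toRight,
      ← card_union_add_card_inter]
    exact Nat.add_le_add_right (card_le_univ _) _
  have hpairs : #(u.toLeft ∩ u.toRight) ≤ d := by
    rw [← Fintype.card_coe]
    exact hs.card_le_of_crossing (ι := ↥(u.toLeft ∩ u.toRight))
      (fun i => ⟨low i, (hmem i i.2).1⟩) (fun i => ⟨high i, (hmem i i.2).2⟩)
      (fun i => by simp [← Subtype.coe_le_coe, low_le_high_iff])
      (fun i j hij => low_le_high_iff.2 (Subtype.coe_ne_coe.2 hij))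
  omega

end StandardExample

lemma Nat.ofDigits_add_le_mul_pow {b c : ℕ} (hb : 2 ≤ b) :
    ∀ {L : List ℕ}, (∀ x ∈ L, x ≤ c) → Nat.ofDigits b L + c ≤ c * b ^ L.length
  | [], _ => by simp
  | d :: L, hL => by
    have ih := Nat.ofDigits_add_le_mul_pow hb fun x hx => hL x (List.mem_cons_of_mem d hx)
    have hd := hL d List.mem_cons_self
    rw [Nat.ofDigits_cons, List.length_cons, pow_succ]
    nlinarith

lemma exists_ofDigits_digits_le_rpow {b c : ℕ} {e : ℝ} (hb : 2 ≤ b) (hc : 2 ≤ c)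
    (hbc : (b : ℝ) < (c : ℝ) ^ e) :
    ∃ N, ∀ n ≥ N, (Nat.ofDigits b (Nat.digits c n) : ℝ) ≤ (n : ℝ) ^ e := by
  have hb₀ : (0 : ℝ) < b := by positivity
  have he : 0 ≤ e := by
    by_contra! he
    have hce : (c : ℝ) ^ e ≤ 1 :=
      Real.rpow_le_one_of_one_le_of_nonpos (by exact_mod_cast (by omega : 1 ≤ c)) he.le
    have hb' : (2 : ℝ) ≤ b := by exact_mod_cast hb
    linarith
  have hr : 1 < (c : ℝ) ^ e / b := (one_lt_div hb₀).2 hbc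
  obtain ⟨K₀, hK₀⟩ := pow_unbounded_of_one_lt ((c : ℝ) * b) hr
  refine ⟨c ^ K₀, fun n hn => ?_⟩
  have hn₀ : n ≠ 0 := (pow_pos (by omega) K₀ |>.trans_le hn).ne'
  set K := Nat.log c n
  have hK : K₀ ≤ K := Nat.le_log_of_pow_le hc hn
  have hdigits : Nat.ofDigits b (Nat.digits c n) ≤ c * b ^ (K + 1) := by
    rw [← Nat.length_digits c n hc hn₀]
    exact le_of_add_le_left (Nat.ofDigits_add_le_mul_pow hb fun x hx =>
      (Nat.digits_lt_base hc hx).le)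
  calc (Nat.ofDigits b (Nat.digits c n) : ℝ) ≤ c * b ^ (K + 1) := by exact_mod_cast hdigits
    _ = (c * b) * b ^ K := by ring
    _ ≤ ((c : ℝ) ^ e / b) ^ K * b ^ K := by
        gcongr
        exact hK₀.le.trans (pow_le_pow_right₀ hr.le hK)
    _ = ((c : ℝ) ^ K) ^ e := by
        rw [← mul_pow, div_mul_cancel₀ _ hb₀.ne', Real.rpow_pow_comm (Nat.cast_nonneg c)]
    _ ≤ (n : ℝ) ^ e := by
        gcongr
        exact_mod_cast Nat.pow_log_le_self c hn₀

-- `0.8295 = 1659 / 2000`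
lemma twelve_lt_twenty_rpow : (12 : ℝ) < 20 ^ (0.8295 : ℝ) := by
  rw [← pow_lt_pow_iff_left₀ (by norm_num) (by positivity) (by norm_num : 2000 ≠ 0),
    ← Real.rpow_mul_natCast (by norm_num)]
  norm_num
  have h : ((12 ^ 2000 : ℕ) : ℝ) < ((20 ^ 1659 : ℕ) : ℝ) := Nat.cast_lt.2 (by decide +kernel)
  rwa [Nat.cast_pow, Nat.cast_pow, Nat.cast_ofNat, Nat.cast_ofNat] at h

/-- Corollary 2.2: for all sufficiently large `n`, there is an `n`-element poset whose
largest induced subposet of dimension at most 2 has size at most `n^0.8295`. -/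
theorem exStar_D3_upper : ∃ N : ℕ, ∀ n : ℕ, N ≤ n →
    ∃ (P : Type) (_ : PartialOrder P) (_ : Fintype P), Fintype.card P = n ∧
      ∀ S : Finset P, dimLE {x // x ∈ S} 2 → (S.card : ℝ) ≤ (n : ℝ) ^ (0.8295 : ℝ) := by
  have hS₁₀ : DimLESubposetsCardLE (StandardExample (Fin 10)) 2 12 := by
    simpa using StandardExample.dimLESubposetsCardLE (ι := Fin 10) 2
  obtain ⟨N, hN⟩ := exists_ofDigits_digits_le_rpow (b := 12) (c := 20) (by norm_num) (by norm_num)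
    (by exact_mod_cast twelve_lt_twenty_rpow)
  refine ⟨N, fun n hn => ⟨HornerPoset (StandardExample (Fin 10)) (Nat.digits 20 n),
    inferInstance, inferInstance, ?_, fun S hS => ?_⟩⟩
  · rw [HornerPoset.card, StandardExample.card, Fintype.card_fin, Nat.ofDigits_digits]
  · calc (S.card : ℝ) ≤ Nat.ofDigits 12 (Nat.digits 20 n) := by
          exact_mod_cast hS₁₀.hornerPoset _ S hS
      _ ≤ (n : ℝ) ^ (0.8295 : ℝ) := hN n hn
end

section
/- The function m ↦ log_{2m}(m+2) over positive integers attains its minimum at m = 10, with value log_20 12 ≈ 0.82948 < 0.8295. -/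
/-!
Both conjuncts follow by comparing with the rational `180 / 217`, which lies strictly between
`log_20 12 ≈ 0.829482` and `0.8295` and below `log_{2m}(m+2)` for every `m ≠ 10`. Each comparison
of a logarithm with `p / q` is an integer inequality `a ^ q ≤ b ^ p` between powers: finitely many
are checked by evaluation, and for `m ≥ 20` one uses `(2m)^5 ≤ (m+2)^6`.
-/

namespace Real

lemma logb_le_div_of_pow_le {a b : ℝ} {p q : ℕ} (hb : 1 < b) (ha : 0 < a) (hq : 0 < q)
    (h : a ^ q ≤ b ^ p) : logb b a ≤ p / q := by
  have hlog : q * log a ≤ p * log b := by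
    simpa only [log_pow] using log_le_log (by positivity) h
  rw [logb, div_le_div_iff₀ (log_pos hb) (by exact_mod_cast hq)]
  linarith

lemma div_le_logb_of_pow_le {a b : ℝ} {p q : ℕ} (hb : 1 < b) (hq : 0 < q)
    (h : b ^ p ≤ a ^ q) : p / q ≤ logb b a := by
  have hlog : p * log b ≤ q * log a := by
    simpa only [log_pow] using log_le_log (by positivity) h
  rw [logb, div_le_div_iff₀ (by exact_mod_cast hq) (log_pos hb)]
  linarith

end Real

lemma two_mul_pow_five_le_add_two_pow_six {m : ℕ} (hm : 20 ≤ m) : (2 * m) ^ 5 ≤ (m + 2) ^ 6 :=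
  calc (2 * m) ^ 5 = 32 * m ^ 5 := by ring
    _ ≤ (m + 12) * m ^ 5 := by gcongr; omega
    _ ≤ (m + 12) * m ^ 5 + (60 * m ^ 4 + 160 * m ^ 3 + 240 * m ^ 2 + 192 * m + 64) :=
      Nat.le_add_right _ _
    _ = (m + 2) ^ 6 := by ring

lemma two_mul_pow_le_add_two_pow {m : ℕ} (hm : 0 < m) (h10 : m ≠ 10) :
    (2 * m) ^ 180 ≤ (m + 2) ^ 217 := by
  rcases lt_or_ge m 20 with hsmall | hlarge
  · revert h10
    interval_cases m <;> norm_num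
  · calc (2 * m) ^ 180 = ((2 * m) ^ 5) ^ 36 := by rw [← pow_mul]
      _ ≤ ((m + 2) ^ 6) ^ 36 :=
        Nat.pow_le_pow_left (two_mul_pow_five_le_add_two_pow_six hlarge) 36
      _ = (m + 2) ^ 216 := by rw [← pow_mul]
      _ ≤ (m + 2) ^ 217 := Nat.pow_le_pow_right (by omega) (by norm_num)

/-- The function `m ↦ log_{2m}(m+2)` on positive integers attains its minimum at
`m = 10`, with value `log_20 12 < 0.8295`. -/
theorem logb_min_at_ten :
    (∀ m : ℕ, 0 < m → Real.logb 20 12 ≤ Real.logb (2 * (m : ℝ)) ((m : ℝ) + 2)) ∧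
    Real.logb 20 12 < 0.8295 := by
  have hlogb : Real.logb 20 12 ≤ (180 : ℕ) / (217 : ℕ) :=
    Real.logb_le_div_of_pow_le (by norm_num) (by norm_num) (by norm_num) (by norm_num)
  refine ⟨fun m hm => ?_, hlogb.trans_lt (by norm_num)⟩
  rcases eq_or_ne m 10 with rfl | h10
  · norm_num
  have hbase : (1 : ℝ) < 2 * m := by
    have : (1 : ℝ) ≤ m := by exact_mod_cast hm
    linarith
  refine hlogb.trans (Real.div_le_logb_of_pow_le hbase (by norm_num) ?_)
  exact_mod_cast two_mul_pow_le_add_two_pow hm h10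
end

section
/- The maximum size of an induced subposet of the Boolean lattice B_3 with order dimension at most 2 is 7. -/
open Finset

theorem dimLE_of_injective_monotone {α β : Type*} [PartialOrder α] [LinearOrder β] {d : ℕ}
    (f : Fin d → α → β) (hinj : ∀ i, Function.Injective (f i)) (hmono : ∀ i, Monotone (f i))
    (hreflect : ∀ x y, (∀ i, f i x ≤ f i y) → x ≤ y) : dimLE α d :=
  ⟨fun i => LinearOrder.lift' (f i) (hinj i), fun i _ _ h => hmono i h, hreflect⟩

theorem not_dimLE_of_standardExample {α ι : Type*} [PartialOrder α] [Fintype ι] {d : ℕ}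
    (a b : ι → α) (hab : ∀ i j, i ≠ j → a i ≤ b j) (hnab : ∀ i, ¬ a i ≤ b i)
    (hd : d < Fintype.card ι) : ¬ dimLE α d := by
  rintro ⟨L, hext, hreflect⟩
  have hrev : ∀ i, ∃ k, ¬ (L k).le (a i) (b i) := fun i => by
    by_contra! h
    exact hnab i (hreflect _ _ h)
  choose k hk using hrev
  obtain ⟨i, j, hij, hkij⟩ := Fintype.exists_ne_map_eq_of_card_lt k (by simpa using hd)
  have hji : (L (k i)).le (b j) (a j) := hkij ▸ ((L (k j)).le_total _ _).resolve_left (hk j)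
  exact hk i <| (L (k i)).le_trans _ _ _ (hext _ _ _ (hab i j hij)) <|
    (L (k i)).le_trans _ _ _ hji (hext _ _ _ (hab j i hij.symm))

theorem not_dimLE_of_singleton_mem_of_compl_singleton_mem {ι : Type*} [Fintype ι] [DecidableEq ι]
    {S : Finset (Finset ι)} {d : ℕ} (hsingleton : ∀ i, {i} ∈ S) (hcompl : ∀ i, {i}ᶜ ∈ S)
    (hd : d < Fintype.card ι) : ¬ dimLE {x // x ∈ S} d :=
  not_dimLE_of_standardExample (fun i => ⟨{i}, hsingleton i⟩) (fun i => ⟨{i}ᶜ, hcompl i⟩)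
    (fun i j hij => by simpa [← Subtype.coe_le_coe] using hij.symm)
    (fun i => by simp [← Subtype.coe_le_coe]) hd

def cutB3 : Finset (Finset (Fin 3)) := univ.erase {0}

def realizer : Fin 2 → List (Finset (Fin 3))
  | 0 => [∅, {1}, {0, 1}, {2}, {1, 2}, {0, 2}, univ]
  | 1 => [∅, {2}, {0, 2}, {1}, {1, 2}, {0, 1}, univ]

theorem dimLE_cutB3 : dimLE {x // x ∈ cutB3} 2 :=
  dimLE_of_injective_monotone (fun i x => (realizer i).idxOf x.1)
    (by decide) (by decide) (by decide)

/-- The maximum size of an induced subposet of the Boolean lattice `B_3` of order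
dimension at most 2 is 7. -/
theorem boolean_three_dim2 :
    IsGreatest {n | ∃ S : Finset (Finset (Fin 3)), dimLE {x // x ∈ S} 2 ∧ S.card = n} 7 := by
  refine ⟨⟨cutB3, dimLE_cutB3, by decide⟩, ?_⟩
  rintro n ⟨S, hS, rfl⟩
  by_contra! hcard
  have hS_univ : S = univ :=
    eq_univ_of_card S (le_antisymm (card_le_univ S) (by simpa using Nat.succ_le_of_lt hcard))
  subst hS_univ
  exact not_dimLE_of_singleton_mem_of_compl_singleton_mem (fun _ => mem_univ _)
    (fun _ => mem_univ _) (by simp) hS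
end

section
/- For any finite poset P and family F of posets closed under isomorphism, if S is an F-free induced subposet of P^k, then writing S_α for the elements of S with initial segment α (an i-tuple), |S_α| ≤ (ex*(P,F))^{k-i}. -/
/-!
Split `S_α` according to the `(i+1)`-st coordinate. The values `Q(α)` taken there form an
induced copy of a subposet of `P` inside `S`: elements of `S_α` agree on the first `i`
coordinates, so the lexicographic order compares them by that coordinate alone. Hence
`|Q(α)| ≤ ex*(P,F)`, and `|S_α| ≤ |Q(α)| · max_p |S_{(α,p)}|` gives the bound by downward
induction on `i`, starting from `|S_α| ≤ 1` when `i = k`.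
-/

open Finset

def IsFFree {α : Type*} [PartialOrder α] {ι : Type*} (F : ι → Type*)
    [∀ i, PartialOrder (F i)] (S : Finset α) : Prop :=
  ∀ i, ¬ Nonempty (F i ↪o S)

namespace IsFFree

variable {α β : Type*} [PartialOrder α] [PartialOrder β] {ι : Type*} {F : ι → Type*}
  [∀ i, PartialOrder (F i)] {S : Finset α}

theorem of_orderEmbedding (hS : IsFFree F S) {T : Finset β} (e : T ↪o S) : IsFFree F T :=
  fun i ⟨f⟩ => hS i ⟨f.trans e⟩

theorem mono (hS : IsFFree F S) {T : Finset α} (hTS : T ⊆ S) : IsFFree F T :=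
  hS.of_orderEmbedding (OrderEmbedding.ofMapLEIff (fun x => ⟨x, hTS x.2⟩) fun _ _ => Iff.rfl)

theorem card_le_exStar [Fintype α] (hS : IsFFree F S) : #S ≤ exStar α F :=
  le_csSup ⟨Fintype.card α, by rintro n ⟨T, -, rfl⟩; exact card_le_univ T⟩ ⟨S, hS, rfl⟩

end IsFFree

theorem Pi.Lex.le_iff_of_eq_of_ne {ι : Type*} [LinearOrder ι] {β : ι → Type*}
    [∀ i, PartialOrder (β i)] {x y : Lex (∀ i, β i)} {i : ι}
    (heq : ∀ j < i, ofLex x j = ofLex y j) (hne : ofLex x i ≠ ofLex y i) :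
    x ≤ y ↔ ofLex x i ≤ ofLex y i := by
  have hxy : x ≠ y := fun h => hne (h ▸ rfl)
  rw [le_iff_lt_or_eq, le_iff_lt_or_eq, or_iff_left hxy, or_iff_left hne]
  constructor
  · rintro ⟨j, hj, hlt⟩
    rcases lt_trichotomy j i with h | rfl | h
    · exact absurd (heq j h) hlt.ne
    · exact hlt
    · exact absurd (hj i h) hne
  · exact fun h => ⟨i, heq, h⟩

open scoped Classical in
theorem exists_orderEmbedding_image_eval {ι : Type*} [LinearOrder ι] {β : ι → Type*}
    [∀ i, PartialOrder (β i)] (T : Finset (Lex (∀ i, β i))) (i : ι)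
    (hT : ∀ s ∈ T, ∀ t ∈ T, ∀ j < i, ofLex s j = ofLex t j) :
    Nonempty (T.image (fun s : Lex (∀ i, β i) => ofLex s i) ↪o T) := by
  choose rep hrepT hrep_eval using
    fun p : T.image (fun s : Lex (∀ i, β i) => ofLex s i) => mem_image.1 p.2
  refine ⟨OrderEmbedding.ofMapLEIff (fun p => ⟨rep p, hrepT p⟩) fun p q => ?_⟩
  rcases eq_or_ne p q with rfl | hpq
  · simp only [le_refl]
  · have hne : ofLex (rep p) i ≠ ofLex (rep q) i := by
      rw [hrep_eval, hrep_eval]; exact Subtype.coe_ne_coe.2 hpq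
    rw [Subtype.mk_le_mk, Pi.Lex.le_iff_of_eq_of_ne (hT _ (hrepT p) _ (hrepT q)) hne,
      hrep_eval, hrep_eval, Subtype.coe_le_coe]

open scoped Classical in
theorem card_le_exStar_pow_of_eq_below {P : Type*} [PartialOrder P] [Fintype P] {ι : Type*}
    {F : ι → Type*} [∀ i, PartialOrder (F i)] {k : ℕ} (T : Finset (LexPow P k))
    (hT : IsFFree F T) (m : ℕ)
    (heq : ∀ s ∈ T, ∀ t ∈ T, ∀ j : Fin k, (j : ℕ) < m → ofLex s j = ofLex t j) :
    #T ≤ exStar P F ^ (k - m) := by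
  induction hn : k - m generalizing m T with
  | zero =>
    refine card_le_one.2 fun s hs t ht => ofLex.injective (funext fun j => ?_)
    exact heq s hs t ht j (by omega)
  | succ n ih =>
    set j₀ : Fin k := ⟨m, by omega⟩
    have hfiber (p : P) :
        #(T.filter fun s : LexPow P k => ofLex s j₀ = p) ≤ exStar P F ^ n := by
      refine ih _ (hT.mono (filter_subset _ _)) (m + 1) ?_ (by omega)
      intro s hs t ht j hj
      rw [mem_filter] at hs ht
      rcases Nat.lt_succ_iff_lt_or_eq.1 hj with hj | hj
      · exact heq s hs.1 t ht.1 j hj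
      · rw [show j = j₀ from Fin.ext hj, hs.2, ht.2]
    obtain ⟨e⟩ :=
      exists_orderEmbedding_image_eval T j₀ fun s hs t ht j hj => heq s hs t ht j hj
    calc #T ≤ exStar P F ^ n * #(T.image fun s : LexPow P k => ofLex s j₀) :=
          card_le_mul_card_image T _ fun p _ => hfiber p
      _ ≤ exStar P F ^ n * exStar P F := by
          gcongr; exact (hT.of_orderEmbedding e).card_le_exStar
      _ = exStar P F ^ (n + 1) := (pow_succ _ _).symm

/-- The inductive inequality in the proof of Theorem 2.1: if `S ⊆ P^k` is `F`-free and
`α` is an `i`-tuple, then the set `S_α` of elements of `S` with initial segment `α` has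
size at most `(ex*(P,F))^(k-i)`. -/
theorem S_alpha_bound (P : Type*) [PartialOrder P] [Fintype P] {ι : Type*}
    (F : ι → Type*) [∀ i, PartialOrder (F i)] (k : ℕ) (S : Finset (LexPow P k))
    (hS : ∀ i, ¬ Nonempty (F i ↪o {x // x ∈ S}))
    (i : ℕ) (hik : i ≤ k) (α : Fin i → P) :
    Set.ncard {s : LexPow P k | s ∈ S ∧ ∀ j : Fin i, ofLex s (Fin.castLE hik j) = α j}
      ≤ (exStar P F) ^ (k - i) := by
  classical
  set Sα := S.filter fun s : LexPow P k => ∀ j : Fin i, ofLex s (Fin.castLE hik j) = α j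
  have hSα :
      {s : LexPow P k | s ∈ S ∧ ∀ j : Fin i, ofLex s (Fin.castLE hik j) = α j} = Sα :=
    (coe_filter _ S).symm
  rw [hSα, Set.ncard_coe_finset]
  refine card_le_exStar_pow_of_eq_below Sα (IsFFree.mono hS (filter_subset _ S : Sα ⊆ S)) i
    ?_
  intro s hs t ht j hj
  rw [mem_filter] at hs ht
  have hcast : Fin.castLE hik ⟨j, hj⟩ = j := Fin.ext rfl
  rw [← hcast, hs.2, ht.2]
end
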